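/- arXiv:2205.13431 — 4 statements merged into one kernel-verified Lean document; each statement's English description precedes it below -/
import Mathlib

section
/- Let B₁ be a nonzero vector in F³ and B₂ a 3×2 full column rank matrix over a field F. Then there exist an invertible 3×3 matrix P, a nonzero scalar D₁, an invertible 2×2 matrix D₂, a column R₁ of I₃, and a 3×2 matrix R₂ consisting of two distinct columns of I₃, such that P·B₁·D₁ = R₁ and P·B₂·D₂ = R₂. -/
open Matrix

private lemma key3 {F : Type*} [Field F] {n : ℕ} (u : Fin n → Fin n → F)
    (hu : LinearIndependent F u) :
    ∃ P : Matrix (Fin n) (Fin n) F, IsUnit P ∧ ∀ k, P.mulVec (u k) = Pi.single k 1 := by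
  set M : Matrix (Fin n) (Fin n) F := (Matrix.of u)ᵀ with hMdef
  have hM : IsUnit M := by
    rw [← Matrix.linearIndependent_cols_iff_isUnit]
    simpa [hMdef] using hu
  refine ⟨M⁻¹, (Matrix.isUnit_nonsing_inv_iff).mpr hM, fun k => ?_⟩
  have h1 : M.mulVec (Pi.single k 1) = u k := by
    ext i
    simp [Matrix.mulVec_single, hMdef]
  calc M⁻¹.mulVec (u k) = M⁻¹.mulVec (M.mulVec (Pi.single k 1)) := by rw [h1]
    _ = (M⁻¹ * M).mulVec (Pi.single k 1) := by rw [Matrix.mulVec_mulVec]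
    _ = Pi.single k 1 := by
        rw [Matrix.nonsing_inv_mul _ ((Matrix.isUnit_iff_isUnit_det _).mp hM),
          Matrix.one_mulVec]

private lemma exists_notMem_span3 {F : Type*} [Field F] (v : Fin 2 → Fin 3 → F) :
    ∃ x : Fin 3 → F, x ∉ Submodule.span F (Set.range v) := by
  classical
  by_contra h
  push_neg at h
  have htop : Submodule.span F (Set.range v) = ⊤ := Submodule.eq_top_iff'.mpr h
  have h1 : Module.finrank F (Fin 3 → F) ≤ 2 := by
    rw [← finrank_top F (Fin 3 → F), ← htop]
    refine (finrank_span_le_card _).trans ?_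
    rw [Set.toFinset_card]
    exact (Fintype.card_range_le v).trans (by simp)
  simp [Module.finrank_pi] at h1

private lemma swap_li3 {F : Type*} [Field F] (v : Fin 2 → Fin 3 → F)
    (hv : LinearIndependent F v) : LinearIndependent F ![v 1, v 0] := by
  have h := hv.comp ![1, 0] (by decide)
  have he : ![v 1, v 0] = v ∘ ![1, 0] := by
    funext k; fin_cases k <;> rfl
  rw [he]; exact h

private lemma pair_li3 {F : Type*} [Field F] (v : Fin 2 → Fin 3 → F)
    (hv : LinearIndependent F v) (c : Fin 2 → F) (hc : c 0 ≠ 0) :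
    LinearIndependent F ![c 0 • v 0 + c 1 • v 1, v 1] := by
  rw [Fintype.linearIndependent_iff]
  intro g hg
  rw [Fin.sum_univ_two] at hg
  simp only [Matrix.cons_val_zero, Matrix.cons_val_one, Matrix.head_cons] at hg
  have h2 := Fintype.linearIndependent_iff.mp hv ![g 0 * c 0, g 0 * c 1 + g 1] ?_
  · have e0 : g 0 * c 0 = 0 := by simpa using h2 0
    have e1 : g 0 * c 1 + g 1 = 0 := by simpa using h2 1
    have hg0 : g 0 = 0 := by
      rcases mul_eq_zero.mp e0 with h | h
      · exact h
      · exact absurd h hc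
    have hg1 : g 1 = 0 := by
      rw [hg0] at e1; simpa using e1
    intro i; fin_cases i <;> assumption
  · rw [Fin.sum_univ_two]
    simp only [Matrix.cons_val_zero, Matrix.cons_val_one, Matrix.head_cons]
    linear_combination (norm := module) hg

private lemma master3 {F : Type*} [Field F] (B₁ : Fin 3 → F)
    (B₂ : Matrix (Fin 3) (Fin 2) F)
    (u : Fin 3 → Fin 3 → F) (hu : LinearIndependent F u)
    (j : Fin 3) (hj : u j = B₁)
    (D₂ : Matrix (Fin 2) (Fin 2) F) (hD₂ : IsUnit D₂)
    (f : Fin 2 → Fin 3) (hf : Function.Injective f)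
    (hcol : ∀ k i, (B₂ * D₂) i k = u (f k) i) :
    ∃ (P : Matrix (Fin 3) (Fin 3) F) (D₁ : F) (D₂ : Matrix (Fin 2) (Fin 2) F)
      (j : Fin 3) (R₂ : Matrix (Fin 3) (Fin 2) F),
      IsUnit P ∧ D₁ ≠ 0 ∧ IsUnit D₂ ∧
      (∃ f : Fin 2 → Fin 3, Function.Injective f ∧
        ∀ i k, R₂ i k = if i = f k then 1 else 0) ∧
      D₁ • P.mulVec B₁ = Pi.single j 1 ∧
      P * B₂ * D₂ = R₂ := by
  obtain ⟨P, hP, hPu⟩ := key3 u hu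
  refine ⟨P, 1, D₂, j, Matrix.of fun i k => if i = f k then 1 else 0, hP, one_ne_zero,
    hD₂, ⟨f, hf, fun i k => rfl⟩, ?_, ?_⟩
  · rw [one_smul, ← hj, hPu]
  · ext i k
    rw [Matrix.mul_assoc]
    have hv : (fun l => (B₂ * D₂) l k) = u (f k) := funext fun l => hcol k l
    have : (P * (B₂ * D₂)) i k = P.mulVec (fun l => (B₂ * D₂) l k) i := by
      simp [Matrix.mulVec, Matrix.mul_apply, dotProduct]
    rw [this, hv, hPu]
    simp [Pi.single_apply]

/-- Two sub-rate sinks with max-flows 1 and 2 at rate 3 are simultaneously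
fully sub-rate decodable. -/
theorem stmt3 {F : Type*} [Field F] (B₁ : Fin 3 → F) (hB₁ : B₁ ≠ 0)
    (B₂ : Matrix (Fin 3) (Fin 2) F) (hB₂ : LinearIndependent F B₂ᵀ) :
    ∃ (P : Matrix (Fin 3) (Fin 3) F) (D₁ : F) (D₂ : Matrix (Fin 2) (Fin 2) F)
      (j : Fin 3) (R₂ : Matrix (Fin 3) (Fin 2) F),
      IsUnit P ∧ D₁ ≠ 0 ∧ IsUnit D₂ ∧
      (∃ f : Fin 2 → Fin 3, Function.Injective f ∧
        ∀ i k, R₂ i k = if i = f k then 1 else 0) ∧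
      D₁ • P.mulVec B₁ = Pi.single j 1 ∧
      P * B₂ * D₂ = R₂ := by
  have hpair : B₂ᵀ = ![B₂ᵀ 0, B₂ᵀ 1] := by
    funext l; fin_cases l <;> rfl
  by_cases h : B₁ ∈ Submodule.span F (Set.range B₂ᵀ)
  · -- B₁ is in the column span of B₂
    obtain ⟨c, hc⟩ := Submodule.mem_span_range_iff_exists_fun F |>.mp h
    rw [Fin.sum_univ_two] at hc
    obtain ⟨x, hx⟩ := exists_notMem_span3 B₂ᵀ
    by_cases hc0 : c 0 = 0
    · -- c 1 ≠ 0 ; use columns swapped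
      have hc1 : c 1 ≠ 0 := by
        intro h1
        apply hB₁
        rw [← hc, hc0, h1]; simp
      have hswap : LinearIndependent F ![B₂ᵀ 1, B₂ᵀ 0] := swap_li3 _ hB₂
      have pli : LinearIndependent F ![B₁, B₂ᵀ 0] := by
        have := pair_li3 ![B₂ᵀ 1, B₂ᵀ 0] hswap ![c 1, c 0] hc1
        simpa [← hc, hc0, add_comm] using this
      have hx' : x ∉ Submodule.span F (Set.range ![B₁, B₂ᵀ 0]) := by
        intro hmem
        apply hx
        refine Submodule.span_le.mpr ?_ hmem
        rintro y ⟨k, rfl⟩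
        fin_cases k
        · simpa using h
        · exact Submodule.subset_span ⟨0, rfl⟩
      have hu : LinearIndependent F (Fin.cons x ![B₁, B₂ᵀ 0] : Fin 3 → Fin 3 → F) :=
        linearIndependent_fin_cons.mpr ⟨pli, hx'⟩
      have hdet : IsUnit (!![(0 : F), 1; c 1, 0]) := by
        rw [Matrix.isUnit_iff_isUnit_det, Matrix.det_fin_two_of, isUnit_iff_ne_zero]
        simpa using hc1
      refine master3 B₁ B₂ _ hu 1 rfl _ hdet ![1, 2] (by decide) ?_
      intro k i
      fin_cases k
      · rw [← hc]
        simp [Matrix.mul_apply, Fin.sum_univ_two, hc0]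
        ring
      · show (B₂ * !![(0 : F), 1; c 1, 0]) i 1 = B₂ᵀ 0 i
        simp [Matrix.mul_apply, Fin.sum_univ_two]
    · -- c 0 ≠ 0
      have pli : LinearIndependent F ![B₁, B₂ᵀ 1] := by
        have := pair_li3 B₂ᵀ hB₂ c hc0
        simpa [← hc] using this
      have hx' : x ∉ Submodule.span F (Set.range ![B₁, B₂ᵀ 1]) := by
        intro hmem
        apply hx
        refine Submodule.span_le.mpr ?_ hmem
        rintro y ⟨k, rfl⟩
        fin_cases k
        · simpa using h
        · exact Submodule.subset_span ⟨1, rfl⟩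
      have hu : LinearIndependent F (Fin.cons x ![B₁, B₂ᵀ 1] : Fin 3 → Fin 3 → F) :=
        linearIndependent_fin_cons.mpr ⟨pli, hx'⟩
      have hdet : IsUnit (!![c 0, 0; c 1, 1]) := by
        rw [Matrix.isUnit_iff_isUnit_det, Matrix.det_fin_two_of, isUnit_iff_ne_zero]
        simpa using hc0
      refine master3 B₁ B₂ _ hu 1 rfl _ hdet ![1, 2] (by decide) ?_
      intro k i
      fin_cases k
      · rw [← hc]
        simp [Matrix.mul_apply, Fin.sum_univ_two]
        ring
      · show (B₂ * !![c 0, 0; c 1, 1]) i 1 = B₂ᵀ 1 i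
        simp [Matrix.mul_apply, Fin.sum_univ_two]
  · -- B₁ is independent of the columns of B₂
    have hu : LinearIndependent F (Fin.cons B₁ B₂ᵀ : Fin 3 → Fin 3 → F) :=
      linearIndependent_fin_cons.mpr ⟨hB₂, h⟩
    refine master3 B₁ B₂ (Fin.cons B₁ B₂ᵀ) hu 0 rfl 1 isUnit_one ![1, 2] (by decide) ?_
    intro k i
    fin_cases k <;> simp [Matrix.mul_one] <;> rfl
end

section
/- Let B₁ = [e₁ | e₃], B₂ = [e₂ | e₃], B₃ = [e₁+e₂ | e₃] be 3×2 matrices over a field F of characteristic ≠ 2 (columns expressed in standard basis vectors of F³). Then there is no set U of three linearly independent vectors in F³ such that for each i, some two vectors of U span the column space of Bᵢ. -/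
private lemma pairCases : ∀ i j a b : Fin 3,
    ({i, j} : Finset (Fin 3)) = {a, b} → (i = a ∧ j = b) ∨ (i = b ∧ j = a) := by decide

private lemma coverLemma : ∀ a1 b1 a2 b2 a3 b3 i j : Fin 3,
    a1 ≠ b1 → a2 ≠ b2 → a3 ≠ b3 →
    ({a1, b1} : Finset (Fin 3)) ≠ {a2, b2} →
    ({a1, b1} : Finset (Fin 3)) ≠ {a3, b3} →
    ({a2, b2} : Finset (Fin 3)) ≠ {a3, b3} →
    i ≠ j →
    ({i, j} : Finset (Fin 3)) = {a1, b1} ∨ ({i, j} : Finset (Fin 3)) = {a2, b2} ∨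
      ({i, j} : Finset (Fin 3)) = {a3, b3} := by decide

private lemma span_pair_of_finset_eq {F : Type*} [Field F] (u : Fin 3 → (Fin 3 → F))
    {i j a b : Fin 3} (h : ({i, j} : Finset (Fin 3)) = {a, b}) :
    Submodule.span F {u i, u j} = Submodule.span F {u a, u b} := by
  rcases pairCases i j a b h with ⟨hi, hj⟩ | ⟨hi, hj⟩ <;> subst hi <;> subst hj
  · rfl
  · rw [Set.pair_comm]

/-- Non-existence example: for the three planes `span{e₁,e₃}`, `span{e₂,e₃}`,
`span{e₁+e₂,e₃}` in `F³` (char F ≠ 2), there is no linearly independent set of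
three vectors such that each plane is spanned by two of them. -/
theorem stmt8 {F : Type*} [Field F] (hchar : (2 : F) ≠ 0) :
    ¬ ∃ u : Fin 3 → (Fin 3 → F),
      LinearIndependent F u ∧
      (∃ a b : Fin 3, a ≠ b ∧
        Submodule.span F {(Pi.single 0 1 : Fin 3 → F), Pi.single 2 1} =
          Submodule.span F {u a, u b}) ∧
      (∃ a b : Fin 3, a ≠ b ∧
        Submodule.span F {(Pi.single 1 1 : Fin 3 → F), Pi.single 2 1} =
          Submodule.span F {u a, u b}) ∧
      (∃ a b : Fin 3, a ≠ b ∧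
        Submodule.span F {(Pi.single 0 1 + Pi.single 1 1 : Fin 3 → F), Pi.single 2 1} =
          Submodule.span F {u a, u b}) := by
  rintro ⟨u, hli, ⟨a1, b1, hab1, h1⟩, ⟨a2, b2, hab2, h2⟩, ⟨a3, b3, hab3, h3⟩⟩
  set e1 : Fin 3 → F := Pi.single 0 1 with he1
  set e2 : Fin 3 → F := Pi.single 1 1 with he2
  set e3 : Fin 3 → F := Pi.single 2 1 with he3
  -- the three planes are pairwise distinct
  have he1P1 : e1 ∈ Submodule.span F {e1, e3} :=
    Submodule.subset_span (by simp)
  have he2P2 : e2 ∈ Submodule.span F {e2, e3} :=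
    Submodule.subset_span (by simp)
  have he1P2 : e1 ∉ Submodule.span F {e2, e3} := by
    rw [Submodule.mem_span_pair]
    rintro ⟨m, n, h⟩
    have h0 := congrFun h 0
    simp [he1, he2, he3, Pi.single_apply] at h0
  have he1P3 : e1 ∉ Submodule.span F {e1 + e2, e3} := by
    rw [Submodule.mem_span_pair]
    rintro ⟨m, n, h⟩
    have h0 := congrFun h 0
    have h1' := congrFun h 1
    simp [he1, he2, he3, Pi.single_apply] at h0 h1'
    rw [h1'] at h0
    exact one_ne_zero h0.symm
  have he2P3 : e2 ∉ Submodule.span F {e1 + e2, e3} := by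
    rw [Submodule.mem_span_pair]
    rintro ⟨m, n, h⟩
    have h0 := congrFun h 0
    have h1' := congrFun h 1
    simp [he1, he2, he3, Pi.single_apply] at h0 h1'
    rw [h0] at h1'
    exact one_ne_zero h1'.symm
  have hP12 : Submodule.span F {e1, e3} ≠ Submodule.span F {e2, e3} := by
    intro h; exact he1P2 (h ▸ he1P1)
  have hP13 : Submodule.span F {e1, e3} ≠ Submodule.span F {e1 + e2, e3} := by
    intro h; exact he1P3 (h ▸ he1P1)
  have hP23 : Submodule.span F {e2, e3} ≠ Submodule.span F {e1 + e2, e3} := by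
    intro h; exact he2P3 (h ▸ he2P2)
  -- hence the three index pairs are pairwise distinct as finsets
  have hs12 : ({a1, b1} : Finset (Fin 3)) ≠ {a2, b2} := by
    intro h; exact hP12 (by rw [h1, h2, span_pair_of_finset_eq u h])
  have hs13 : ({a1, b1} : Finset (Fin 3)) ≠ {a3, b3} := by
    intro h; exact hP13 (by rw [h1, h3, span_pair_of_finset_eq u h])
  have hs23 : ({a2, b2} : Finset (Fin 3)) ≠ {a3, b3} := by
    intro h; exact hP23 (by rw [h2, h3, span_pair_of_finset_eq u h])
  -- e3 belongs to every span of a pair of the u's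
  have he3P1 : e3 ∈ Submodule.span F {e1, e3} := Submodule.subset_span (by simp)
  have he3P2 : e3 ∈ Submodule.span F {e2, e3} := Submodule.subset_span (by simp)
  have he3P3 : e3 ∈ Submodule.span F {e1 + e2, e3} := Submodule.subset_span (by simp)
  have key : ∀ i j : Fin 3, i ≠ j → e3 ∈ Submodule.span F {u i, u j} := by
    intro i j hij
    rcases coverLemma a1 b1 a2 b2 a3 b3 i j hab1 hab2 hab3 hs12 hs13 hs23 hij with h | h | h
    · rw [span_pair_of_finset_eq u h, ← h1]; exact he3P1
    · rw [span_pair_of_finset_eq u h, ← h2]; exact he3P2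
    · rw [span_pair_of_finset_eq u h, ← h3]; exact he3P3
  obtain ⟨α, β, hαβ⟩ := Submodule.mem_span_pair.mp (key 0 1 (by decide))
  obtain ⟨γ, δ, hγδ⟩ := Submodule.mem_span_pair.mp (key 0 2 (by decide))
  obtain ⟨ε, ζ, hεζ⟩ := Submodule.mem_span_pair.mp (key 1 2 (by decide))
  have hind := Fintype.linearIndependent_iff.mp hli
  have hsum1 : ∑ i, (![α - γ, β, -δ]) i • u i = 0 := by
    rw [Fin.sum_univ_three]
    have : (α - γ) • u 0 + β • u 1 + (-δ) • u 2
        = (α • u 0 + β • u 1) - (γ • u 0 + δ • u 2) := by module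
    rw [show ((![α - γ, β, -δ] : Fin 3 → F) 0) = α - γ from rfl,
      show ((![α - γ, β, -δ] : Fin 3 → F) 1) = β from rfl,
      show ((![α - γ, β, -δ] : Fin 3 → F) 2) = -δ from rfl, this, hαβ, hγδ, sub_self]
  have hβ : β = 0 := hind _ hsum1 1
  have hδ : δ = 0 := by have := hind _ hsum1 2; simpa using this
  have he3u0 : e3 = α • u 0 := by rw [← hαβ, hβ, zero_smul, add_zero]
  have hsum2 : ∑ i, (![α, -ε, -ζ]) i • u i = 0 := by
    rw [Fin.sum_univ_three]
    have : α • u 0 + (-ε) • u 1 + (-ζ) • u 2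
        = α • u 0 - (ε • u 1 + ζ • u 2) := by module
    rw [show ((![α, -ε, -ζ] : Fin 3 → F) 0) = α from rfl,
      show ((![α, -ε, -ζ] : Fin 3 → F) 1) = -ε from rfl,
      show ((![α, -ε, -ζ] : Fin 3 → F) 2) = -ζ from rfl, this, hεζ, ← he3u0, sub_self]
  have hα : α = 0 := hind _ hsum2 0
  have : e3 = 0 := by rw [he3u0, hα, zero_smul]
  have h2' := congrFun this 2
  simp [he3, Pi.single_apply] at h2'
end

section
/- Let W₁, …, W_l (2 ≤ l ≤ r) be pairwise distinct (r−1)-dimensional subspaces of F^r with dim(⋂ᵢ Wᵢ) = r − l. Then there exists a linearly independent set U of r vectors in F^r that is an exact spanner of W₁, …, W_l: each Wᵢ is spanned by exactly r−1 vectors of U. -/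
/-!
Let `V = ⋂ Wᵢ`. Counting dimensions, any `l - 1` of the hyperplanes meet in a space of dimension
greater than `r - l = dim V`, so for each `i` there is a vector `wᵢ` lying in every `Wⱼ` with
`j ≠ i` but not in `Wᵢ`. A basis of `V` together with `w₁, …, w_l` is linearly independent, since
in a vanishing combination only the `wᵢ` term escapes `Wᵢ`. These are `r` vectors, and all of them
except `wᵢ` lie in the `(r - 1)`-dimensional `Wᵢ`, so they span it.
-/

open Module Submodule

section

variable {K E ι : Type*} [Field K] [AddCommGroup E] [Module K E]

theorem finrank_le_finrank_biInf_add_card [FiniteDimensional K E] (W : ι → Submodule K E)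
    (hW : ∀ i, finrank K E ≤ finrank K (W i) + 1) (s : Finset ι) :
    finrank K E ≤ finrank K ↥(⨅ i ∈ s, W i) + s.card := by
  classical
  induction s using Finset.induction_on with
  | empty => rw [show ⨅ i ∈ (∅ : Finset ι), W i = ⊤ by simp, finrank_top]; simp
  | @insert a s ha ih =>
    rw [Finset.iInf_insert, Finset.card_insert_of_notMem ha]
    have hsum := finrank_sup_add_finrank_inf_eq (W a) (⨅ i ∈ s, W i)
    have hsup := finrank_le (W a ⊔ ⨅ i ∈ s, W i)
    have hWa := hW a
    omega

theorem exists_forall_ne_mem_notMem_of_finrank_iInf_add_card_le [FiniteDimensional K E]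
    [Fintype ι] (W : ι → Submodule K E) (hW : ∀ i, finrank K E ≤ finrank K (W i) + 1)
    (hint : finrank K ↥(⨅ i, W i) + Fintype.card ι ≤ finrank K E) (i : ι) :
    ∃ w, (∀ j, j ≠ i → w ∈ W j) ∧ w ∉ W i := by
  classical
  by_contra! hle
  have hT : ⨅ j ∈ Finset.univ.erase i, W j ≤ ⨅ j, W j := by
    refine le_iInf fun j => ?_
    rcases eq_or_ne j i with rfl | hji
    · intro x hx
      exact hle x fun k hk => biInf_le W (Finset.mem_erase.2 ⟨hk, Finset.mem_univ k⟩) hx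
    · exact biInf_le W (Finset.mem_erase.2 ⟨hji, Finset.mem_univ j⟩)
  have hmono := finrank_mono hT
  have hcount := finrank_le_finrank_biInf_add_card W hW (Finset.univ.erase i)
  rw [Finset.card_erase_of_mem (Finset.mem_univ i), Finset.card_univ] at hcount
  have hcard := Fintype.card_pos_iff.2 ⟨i⟩
  omega

section

variable {W : ι → Submodule K E} {w : ι → E}

theorem coeff_eq_zero_of_sum_smul_mem (hw : ∀ i j, j ≠ i → w i ∈ W j) (hwi : ∀ i, w i ∉ W i)
    {s : Finset ι} {c : ι → K} {i : ι} (hi : i ∈ s) (hmem : ∑ j ∈ s, c j • w j ∈ W i) :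
    c i = 0 := by
  classical
  rw [← Finset.add_sum_erase s _ hi] at hmem
  have hrest : ∑ j ∈ s.erase i, c j • w j ∈ W i :=
    sum_mem fun j hj => smul_mem _ _ (hw j i (Finset.ne_of_mem_erase hj).symm)
  by_contra hc
  exact hwi i ((smul_mem_iff _ hc).1 ((Submodule.add_mem_iff_left _ hrest).1 hmem))

theorem linearIndependent_sumElim_of_mem_of_notMem {κ : Type*} {v : κ → E}
    (hv : LinearIndependent K v) (hvW : ∀ k i, v k ∈ W i)
    (hw : ∀ i j, j ≠ i → w i ∈ W j) (hwi : ∀ i, w i ∉ W i) :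
    LinearIndependent K (Sum.elim v w) := by
  refine linearIndependent_sum.2 ⟨hv, ?_, ?_⟩
  · exact linearIndependent_iff'.2 fun s c hc i hi =>
      coeff_eq_zero_of_sum_smul_mem hw hwi hi (hc ▸ zero_mem (W i))
  · rw [disjoint_def]
    rintro x hxv hxw
    obtain ⟨c, rfl⟩ := Finsupp.mem_span_range_iff_exists_finsupp.1 hxw
    have hc : c = 0 := Finsupp.ext fun i => by
      by_contra hci
      refine hci (coeff_eq_zero_of_sum_smul_mem hw hwi (Finsupp.mem_support_iff.2 hci) ?_)
      refine span_le.2 ?_ hxv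
      rintro _ ⟨k, rfl⟩
      exact hvW k i
    simp [hc]

end

theorem span_image_compl_singleton_eq [FiniteDimensional K E] [Fintype ι] {u : ι → E}
    (hu : LinearIndependent K u) {W : Submodule K E} {i : ι} (huW : ∀ j, j ≠ i → u j ∈ W)
    (hdim : finrank K W + 1 = Fintype.card ι) :
    span K (u '' {i}ᶜ) = W := by
  classical
  refine eq_of_le_of_finrank_eq (span_le.2 ?_) ?_
  · rintro _ ⟨j, hj, rfl⟩
    exact huW j hj
  · rw [Set.image_eq_range, finrank_span_eq_card (b := fun j : ({i}ᶜ : Set ι) => u j)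
      (hu.comp _ Subtype.coe_injective), Fintype.card_compl_set, Set.card_singleton]
    omega

end

theorem stmt14_general {F : Type*} [Field F] (r l : ℕ) (hlr : l ≤ r)
    (W : Fin l → Submodule F (Fin r → F))
    (hdim : ∀ i, Module.finrank F (W i) = r - 1)
    (hint : Module.finrank F ↥(⨅ i, W i) = r - l) :
    ∃ u : Fin r → (Fin r → F), LinearIndependent F u ∧
      ∀ i : Fin l, ∃ s : Finset (Fin r), s.card = r - 1 ∧
        Submodule.span F (u '' ↑s) = W i := by
  have hr : ∀ i : Fin l, r - 1 + 1 = r := fun i => by have := i.pos; omega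
  have hW : ∀ i, finrank F (Fin r → F) ≤ finrank F (W i) + 1 := fun i => by
    rw [finrank_fin_fun, hdim, hr i]
  choose w hw hwi using exists_forall_ne_mem_notMem_of_finrank_iInf_add_card_le W hW
    (by rw [hint, finrank_fin_fun, Fintype.card_fin]; omega)
  let b := finBasisOfFinrankEq F ↥(⨅ i, W i) hint
  have hbW : ∀ k i, (b k : Fin r → F) ∈ W i := fun k i => iInf_le W i (b k).2
  have hv := linearIndependent_sumElim_of_mem_of_notMem
    (b.linearIndependent.map' _ (ker_subtype _)) hbW hw hwi
  let e : Fin (r - l) ⊕ Fin l ≃ Fin r := finSumFinEquiv.trans (finCongr (Nat.sub_add_cancel hlr))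
  have hu := hv.comp _ e.symm.injective
  refine ⟨_, hu, fun i => ⟨{e (.inr i)}ᶜ, by simp [Finset.card_compl], ?_⟩⟩
  rw [Finset.coe_compl, Finset.coe_singleton]
  refine span_image_compl_singleton_eq hu (fun j hj => ?_) (by rw [hdim, Fintype.card_fin, hr i])
  obtain ⟨k | i', rfl⟩ := e.surjective j
  · simpa using hbW k i
  · simpa using hw i' i fun h => hj (by rw [h])

/-- Full sub-rate decodability for `l` hyperplane sinks: there is a linearly
independent exact spanner of `r` vectors, each hyperplane being spanned by
exactly `r - 1` of them. -/
theorem stmt14 {F : Type*} [Field F] [Infinite F] (r l : ℕ) (h2 : 2 ≤ l) (hlr : l ≤ r)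
    (W : Fin l → Submodule F (Fin r → F))
    (hdist : ∀ i j : Fin l, i ≠ j → W i ≠ W j)
    (hdim : ∀ i, Module.finrank F (W i) = r - 1)
    (hint : Module.finrank F ↥(⨅ i, W i) = r - l) :
    ∃ u : Fin r → (Fin r → F), LinearIndependent F u ∧
      ∀ i : Fin l, ∃ s : Finset (Fin r), s.card = r - 1 ∧
        Submodule.span F (u '' ↑s) = W i :=
  stmt14_general r l hlr W hdim hint
end

section
/- Let W₁, W₂, W₃, W₄ be 2-dimensional subspaces of F³ over a field F such that every pair intersects in a 1-dimensional subspace and every triple intersects trivially. Then any exact spanner of {W₁, W₂, W₃, W₄} (a set V such that each Wᵢ is spanned by exactly two vectors of V) has cardinality at least 4; in particular no linearly independent exact spanner of cardinality 3 exists. -/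
/-- Four planes of `F³` pairwise meeting in lines with trivial triple
intersections: every exact spanner has cardinality at least 4, so no linearly
independent exact spanner of cardinality 3 exists. -/
theorem stmt19 {F : Type*} [Field F] (W : Fin 4 → Submodule F (Fin 3 → F))
    (hdim : ∀ i, Module.finrank F (W i) = 2)
    (hpair : ∀ i j : Fin 4, i ≠ j → Module.finrank F ↥(W i ⊓ W j) = 1)
    (htriple : ∀ i j k : Fin 4, i ≠ j → j ≠ k → i ≠ k → W i ⊓ W j ⊓ W k = ⊥) :
    (∀ V : Finset (Fin 3 → F),
      (∀ i : Fin 4, ∃ s : Finset (Fin 3 → F), s ⊆ V ∧ s.card = 2 ∧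
        Submodule.span F (↑s : Set (Fin 3 → F)) = W i) →
      4 ≤ V.card) ∧
    ¬ ∃ V : Finset (Fin 3 → F), V.card = 3 ∧
        LinearIndependent F (fun x : ↥V => (x : Fin 3 → F)) ∧
        ∀ i : Fin 4, ∃ s : Finset (Fin 3 → F), s ⊆ V ∧ s.card = 2 ∧
          Submodule.span F (↑s : Set (Fin 3 → F)) = W i := by
  have main : ∀ V : Finset (Fin 3 → F),
      (∀ i : Fin 4, ∃ s : Finset (Fin 3 → F), s ⊆ V ∧ s.card = 2 ∧
        Submodule.span F (↑s : Set (Fin 3 → F)) = W i) → 4 ≤ V.card := by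
    intro V hV
    by_contra hlt
    push_neg at hlt
    choose s hsub hcard hspan using hV
    have hmaps : ∀ i ∈ (Finset.univ : Finset (Fin 4)), s i ∈ V.powersetCard 2 := by
      intro i _
      simp [Finset.mem_powersetCard, hsub i, hcard i]
    have hlt2 : (V.powersetCard 2).card < (Finset.univ : Finset (Fin 4)).card := by
      rw [Finset.card_powersetCard, Finset.card_univ, Fintype.card_fin]
      calc V.card.choose 2 ≤ (3).choose 2 := Nat.choose_le_choose 2 (by omega)
        _ < 4 := by norm_num
    obtain ⟨i, _, j, _, hij, hsij⟩ := Finset.exists_ne_map_eq_of_card_lt_of_maps_to hlt2 hmaps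
    have hWij : W i = W j := by rw [← hspan i, ← hspan j, hsij]
    have h1 := hpair i j hij
    rw [← hWij, inf_idem, hdim i] at h1
    exact absurd h1 (by norm_num)
  refine ⟨main, ?_⟩
  rintro ⟨V, hcard3, -, hV⟩
  have := main V hV
  omega
end
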